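/- arXiv:2408.01577 — 4 statements merged into one kernel-verified Lean document; each statement's English description precedes it below -/
import Mathlib

section
/- Let N ≥ 1, a, b > 0, s ∈ (0,1), and let u₀ ∈ L¹(ℝᴺ) ∩ L^∞(ℝᴺ) be nonnegative and not a.e. zero, with mass M = ∫_{ℝᴺ} u₀(x) dx. Define u(x,t) = ∫_{ℝᴺ} P(x−y,t) u₀(y) dy for t > 0. Then lim_{t→∞} t^{N/(2s)} · sup_{x∈ℝᴺ} |u(x,t) − M·K_s(x,t)| = 0. -/
open MeasureTheory Filter Real Topology

/-- The mixed heat kernel `P(x,t)`, inverse Fourier transform of the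
multiplier `exp(-(a|ξ|² + b|ξ|^{2s}) t)`. -/
noncomputable def mixedKernel (N : ℕ) (a b s : ℝ)
    (x : EuclideanSpace ℝ (Fin N)) (t : ℝ) : ℂ :=
  (((2 * Real.pi) ^ N : ℝ))⁻¹ •
    ∫ ξ : EuclideanSpace ℝ (Fin N),
      Complex.exp (Complex.I * ((inner ℝ x ξ : ℝ) : ℂ)) *
        Complex.exp (-(((a * ‖ξ‖ ^ 2 + b * ‖ξ‖ ^ (2 * s)) * t : ℝ) : ℂ))

/-- The fractional heat kernel `K_s(x,t)`, inverse Fourier transform of the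
multiplier `exp(-b|ξ|^{2s} t)`. -/
noncomputable def fracKernel (N : ℕ) (b s : ℝ)
    (x : EuclideanSpace ℝ (Fin N)) (t : ℝ) : ℂ :=
  (((2 * Real.pi) ^ N : ℝ))⁻¹ •
    ∫ ξ : EuclideanSpace ℝ (Fin N),
      Complex.exp (Complex.I * ((inner ℝ x ξ : ℝ) : ℂ)) *
        Complex.exp (-((b * ‖ξ‖ ^ (2 * s) * t : ℝ) : ℂ))



lemma aux_tendsto_bound (d : ℕ) {c p : ℝ} (hc : 0 < c) (hp : 0 < p) :
    Tendsto (fun y : ℝ => (1 + y) ^ d * Real.exp (-(c * y ^ p))) atTop (𝓝 0) := by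
  have h1 : Tendsto (fun x : ℝ => x ^ ((d : ℝ) / p) * Real.exp (-c * x)) atTop (𝓝 0) :=
    tendsto_rpow_mul_exp_neg_mul_atTop_nhds_zero _ c hc
  have h2 : Tendsto (fun y : ℝ => y ^ p) atTop atTop := tendsto_rpow_atTop hp
  have h3 : Tendsto (fun y : ℝ => (2:ℝ) ^ d * ((y ^ p) ^ ((d : ℝ) / p) * Real.exp (-c * y ^ p)))
      atTop (𝓝 ((2:ℝ)^d * 0)) := (h1.comp h2).const_mul _
  rw [mul_zero] at h3
  apply squeeze_zero_norm' _ h3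
  filter_upwards [eventually_ge_atTop (1:ℝ)] with y hy
  have hy0 : (0:ℝ) ≤ y := by linarith
  have hpos : (0:ℝ) ≤ (1+y)^d * Real.exp (-(c * y ^ p)) := by positivity
  rw [Real.norm_of_nonneg hpos]
  have hrw : (y ^ p) ^ ((d : ℝ) / p) = y ^ (d : ℕ) := by
    rw [← Real.rpow_natCast y d, ← Real.rpow_mul hy0]
    congr 1
    field_simp
  rw [hrw, neg_mul]
  have h1y : (1 + y) ^ d ≤ (2:ℝ)^d * y ^ d := by
    rw [← mul_pow]
    apply pow_le_pow_left₀ (by linarith)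
    linarith
  have := Real.exp_pos (-(c * y ^ p))
  calc (1 + y) ^ d * Real.exp (-(c * y ^ p)) ≤ (2:ℝ)^d * y^d * Real.exp (-(c * y ^ p)) := by
        apply mul_le_mul_of_nonneg_right h1y this.le
    _ = 2 ^ d * (y ^ d * Real.exp (-(c * y ^ p))) := by ring

lemma aux_exists_bound (d : ℕ) {c p : ℝ} (hc : 0 < c) (hp : 0 < p) :
    ∃ C : ℝ, ∀ y : ℝ, 0 ≤ y → (1 + y) ^ d * Real.exp (-(c * y ^ p)) ≤ C := by
  obtain ⟨y₀, hy₀⟩ := (aux_tendsto_bound d hc hp).eventually (eventually_le_nhds (show (0:ℝ) < 1 by norm_num)) |>.exists_forall_of_atTop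
  have hcont : ContinuousOn (fun y : ℝ => (1 + y) ^ d * Real.exp (-(c * y ^ p))) (Set.Icc 0 y₀) := by
    apply ContinuousOn.mul (by fun_prop)
    apply Real.continuous_exp.comp_continuousOn
    apply ContinuousOn.neg
    apply ContinuousOn.mul continuousOn_const
    intro y hy
    exact (continuousAt_id.rpow_const (Or.inr hp.le)).continuousWithinAt
  obtain ⟨C₀, hC₀⟩ := IsCompact.exists_bound_of_continuousOn isCompact_Icc hcont
  refine ⟨max C₀ 1, fun y hy => ?_⟩
  rcases le_or_gt y y₀ with h | h
  · calc (1 + y) ^ d * Real.exp (-(c * y ^ p)) ≤ ‖(1 + y) ^ d * Real.exp (-(c * y ^ p))‖ := le_norm_self _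
      _ ≤ C₀ := hC₀ y ⟨hy, h⟩
      _ ≤ max C₀ 1 := le_max_left _ _
  · exact le_trans (hy₀ y h.le) (le_max_right _ _)

lemma aux_integrable {N : ℕ} {c p : ℝ} (hc : 0 < c) (hp : 0 < p) :
    Integrable (fun ξ : EuclideanSpace ℝ (Fin N) => Real.exp (-(c * ‖ξ‖ ^ p))) := by
  obtain ⟨C, hC⟩ := aux_exists_bound (N + 1) hc hp
  have hC0 : 0 ≤ C := le_trans (by positivity) (hC 0 le_rfl)
  have hint : Integrable (fun ξ : EuclideanSpace ℝ (Fin N) => C * (1 + ‖ξ‖) ^ (-((N:ℝ)+1))) := by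
    apply Integrable.const_mul
    apply integrable_one_add_norm (E := EuclideanSpace ℝ (Fin N))
    rw [finrank_euclideanSpace_fin]; linarith
  apply hint.mono'
  · apply Continuous.aestronglyMeasurable
    apply Real.continuous_exp.comp
    exact (continuous_const.mul (continuous_norm.rpow_const fun x => Or.inr hp.le)).neg
  · filter_upwards with ξ
    have h1 : (0:ℝ) < 1 + ‖ξ‖ := by positivity
    rw [Real.norm_of_nonneg (Real.exp_pos _).le, Real.rpow_neg h1.le,
      ← div_eq_mul_inv, le_div_iff₀ (by positivity)]
    calc Real.exp (-(c * ‖ξ‖ ^ p)) * (1 + ‖ξ‖) ^ ((N:ℝ)+1)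
        = (1 + ‖ξ‖) ^ (N+1 : ℕ) * Real.exp (-(c * ‖ξ‖ ^ p)) := by
          rw [mul_comm]; congr 1
          rw [← Real.rpow_natCast (1 + ‖ξ‖) (N+1)]; push_cast; ring_nf
      _ ≤ C := hC _ (norm_nonneg _)


noncomputable def fhat (N : ℕ) (u₀ : EuclideanSpace ℝ (Fin N) → ℝ)
    (ξ : EuclideanSpace ℝ (Fin N)) : ℂ :=
  ∫ y, Complex.exp (-(Complex.I * ((inner ℝ y ξ : ℝ) : ℂ))) * (u₀ y : ℂ)

lemma abs_exp_I_mul (r : ℝ) : ‖Complex.exp (-(Complex.I * (r:ℂ)))‖ = 1 := by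
  rw [Complex.norm_exp]
  simp [Complex.exp_zero]

lemma fhat_continuous (N : ℕ) (u₀ : EuclideanSpace ℝ (Fin N) → ℝ)
    (hInt : Integrable u₀) : Continuous (fhat N u₀) := by
  apply continuous_of_dominated (bound := fun y => |u₀ y|)
  · intro ξ
    apply AEStronglyMeasurable.mul _ (Complex.continuous_ofReal.comp_aestronglyMeasurable hInt.1)
    apply Continuous.aestronglyMeasurable
    have : Continuous fun y : EuclideanSpace ℝ (Fin N) => (inner ℝ y ξ : ℝ) := continuous_id.inner continuous_const
    exact Complex.continuous_exp.comp (continuous_const.mul (Complex.continuous_ofReal.comp this)).neg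
  · intro ξ
    filter_upwards with y
    rw [norm_mul]
    rw [show ‖Complex.exp (-(Complex.I * ((inner ℝ y ξ : ℝ):ℂ)))‖ = 1 from abs_exp_I_mul _]
    simp
  · exact hInt.abs
  · filter_upwards with y
    have : Continuous fun ξ : EuclideanSpace ℝ (Fin N) => (inner ℝ y ξ : ℝ) := continuous_const.inner continuous_id
    exact (Complex.continuous_exp.comp (continuous_const.mul (Complex.continuous_ofReal.comp this)).neg).mul continuous_const

lemma fhat_zero (N : ℕ) (u₀ : EuclideanSpace ℝ (Fin N) → ℝ) :
    fhat N u₀ 0 = ((∫ y, u₀ y : ℝ) : ℂ) := by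
  unfold fhat
  simp only [inner_zero_right, Complex.ofReal_zero, mul_zero, neg_zero, Complex.exp_zero, one_mul]
  exact integral_ofReal

lemma fhat_abs_le (N : ℕ) (u₀ : EuclideanSpace ℝ (Fin N) → ℝ)
    (hpos : ∀ x, 0 ≤ u₀ x) (ξ : EuclideanSpace ℝ (Fin N)) :
    ‖fhat N u₀ ξ‖ ≤ ∫ y, u₀ y := by
  unfold fhat
  refine (norm_integral_le_integral_norm _).trans (le_of_eq ?_)
  congr 1; ext y
  rw [norm_mul, show ‖Complex.exp (-(Complex.I * ((inner ℝ y ξ : ℝ):ℂ)))‖ = 1 from abs_exp_I_mul _,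
    one_mul, Complex.norm_real, Real.norm_of_nonneg (hpos y)]

lemma abs_exp_I_mul' (r : ℝ) : ‖Complex.exp (Complex.I * (r:ℂ))‖ = 1 := by
  rw [Complex.norm_exp]
  simp

lemma key_repr (N : ℕ) (a b s t : ℝ) (ha : 0 < a) (hb : 0 < b) (hs0 : 0 < s) (ht : 0 < t)
    (u₀ : EuclideanSpace ℝ (Fin N) → ℝ) (hInt : Integrable u₀) (hpos : ∀ x, 0 ≤ u₀ x)
    (M : ℝ) (hM : M = ∫ x, u₀ x) (x : EuclideanSpace ℝ (Fin N)) :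
    ‖(∫ y, mixedKernel N a b s (x - y) t * (u₀ y : ℂ)) - (M : ℂ) * fracKernel N b s x t‖
      ≤ (((2 * Real.pi) ^ N : ℝ))⁻¹ *
        ∫ ξ : EuclideanSpace ℝ (Fin N),
          Real.exp (-(b * ‖ξ‖ ^ (2 * s) * t)) *
            ‖((Real.exp (-(a * t * ‖ξ‖ ^ 2)) : ℝ) : ℂ) * fhat N u₀ ξ - (M : ℂ)‖ := by
  have hm : (0:ℝ) < (2 * Real.pi) ^ N := by positivity
  have h2s : (0:ℝ) < 2 * s := by linarith
  have hMnn : 0 ≤ M := hM ▸ integral_nonneg hpos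
  have habs : ∀ ξ, ‖fhat N u₀ ξ‖ ≤ M := fun ξ => by
    exact hM ▸ fhat_abs_le N u₀ hpos ξ
  set g₁ : EuclideanSpace ℝ (Fin N) → ℝ := fun ξ => (a * ‖ξ‖ ^ 2 + b * ‖ξ‖ ^ (2 * s)) * t with hg₁
  set g₂ : EuclideanSpace ℝ (Fin N) → ℝ := fun ξ => b * ‖ξ‖ ^ (2 * s) * t with hg₂
  have hg₂nn : ∀ ξ, 0 ≤ g₂ ξ := fun ξ => by
    have : (0:ℝ) ≤ ‖ξ‖ ^ (2 * s) := Real.rpow_nonneg (norm_nonneg _) _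
    positivity
  have hg12 : ∀ ξ, g₂ ξ ≤ g₁ ξ := fun ξ => by
    simp only [hg₁, hg₂]
    nlinarith [mul_nonneg (mul_nonneg ha.le (sq_nonneg ‖ξ‖)) ht.le]
  have hrpow_cont : Continuous fun ξ : EuclideanSpace ℝ (Fin N) => ‖ξ‖ ^ (2 * s) :=
    continuous_norm.rpow_const fun _ => Or.inr h2s.le
  have hcg₁ : Continuous g₁ := by
    apply Continuous.mul _ continuous_const
    exact ((continuous_const.mul ((continuous_norm).pow 2)).add (continuous_const.mul hrpow_cont))
  have hcg₂ : Continuous g₂ := by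
    exact (continuous_const.mul hrpow_cont).mul continuous_const
  have hint2 : Integrable (fun ξ : EuclideanSpace ℝ (Fin N) => Real.exp (-(g₂ ξ))) := by
    refine (aux_integrable (N := N) (mul_pos hb ht) h2s).congr ?_
    filter_upwards with ξ
    simp only [hg₂]; ring_nf
  have habs_exp : ∀ (ξ : EuclideanSpace ℝ (Fin N)) (z : EuclideanSpace ℝ (Fin N)) (g : _ → ℝ),
      ‖Complex.exp (Complex.I * ((inner ℝ z ξ : ℝ) : ℂ)) * Complex.exp (-((g ξ : ℝ) : ℂ))‖
        = Real.exp (-(g ξ)) := by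
    intro ξ z g
    rw [norm_mul, abs_exp_I_mul', one_mul, ← Complex.ofReal_neg, ← Complex.ofReal_exp,
      Complex.norm_real, Real.norm_eq_abs]
    exact abs_of_nonneg (Real.exp_pos _).le
  -- integrabilities of the two ξ-integrands
  have hint1' : Integrable (fun ξ : EuclideanSpace ℝ (Fin N) =>
      Complex.exp (Complex.I * ((inner ℝ x ξ : ℝ) : ℂ)) * Complex.exp (-((g₁ ξ : ℝ) : ℂ)) * fhat N u₀ ξ) := by
    apply (hint2.const_mul M).mono'
    · apply Continuous.aestronglyMeasurable
      have h1 : Continuous fun ξ : EuclideanSpace ℝ (Fin N) => Complex.exp (Complex.I * ((inner ℝ x ξ : ℝ) : ℂ)) := by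
        exact Complex.continuous_exp.comp (continuous_const.mul
          (Complex.continuous_ofReal.comp (continuous_const.inner continuous_id)))
      have h2 : Continuous fun ξ : EuclideanSpace ℝ (Fin N) => Complex.exp (-((g₁ ξ : ℝ) : ℂ)) :=
        Complex.continuous_exp.comp (Complex.continuous_ofReal.comp hcg₁).neg
      exact (h1.mul h2).mul (fhat_continuous N u₀ hInt)
    · filter_upwards with ξ
      rw [norm_mul, show ‖Complex.exp (Complex.I * ((inner ℝ x ξ : ℝ) : ℂ)) * Complex.exp (-((g₁ ξ : ℝ) : ℂ))‖
          = Real.exp (-(g₁ ξ)) from habs_exp ξ x g₁]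
      calc Real.exp (-(g₁ ξ)) * ‖fhat N u₀ ξ‖ ≤ Real.exp (-(g₂ ξ)) * M := by
            apply mul_le_mul (Real.exp_le_exp.mpr (by linarith [hg12 ξ])) (habs ξ) (norm_nonneg _) (Real.exp_pos _).le
        _ = M * Real.exp (-(g₂ ξ)) := mul_comm _ _
  have hint2' : Integrable (fun ξ : EuclideanSpace ℝ (Fin N) =>
      Complex.exp (Complex.I * ((inner ℝ x ξ : ℝ) : ℂ)) * Complex.exp (-((g₂ ξ : ℝ) : ℂ)) * (M : ℂ)) := by
    apply (hint2.const_mul M).mono'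
    · apply Continuous.aestronglyMeasurable
      have h1 : Continuous fun ξ : EuclideanSpace ℝ (Fin N) => Complex.exp (Complex.I * ((inner ℝ x ξ : ℝ) : ℂ)) := by
        exact Complex.continuous_exp.comp (continuous_const.mul
          (Complex.continuous_ofReal.comp (continuous_const.inner continuous_id)))
      have h2 : Continuous fun ξ : EuclideanSpace ℝ (Fin N) => Complex.exp (-((g₂ ξ : ℝ) : ℂ)) :=
        Complex.continuous_exp.comp (Complex.continuous_ofReal.comp hcg₂).neg
      exact (h1.mul h2).mul continuous_const
    · filter_upwards with ξ
      rw [norm_mul, show ‖Complex.exp (Complex.I * ((inner ℝ x ξ : ℝ) : ℂ)) * Complex.exp (-((g₂ ξ : ℝ) : ℂ))‖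
          = Real.exp (-(g₂ ξ)) from habs_exp ξ x g₂]
      rw [Complex.norm_real, Real.norm_of_nonneg hMnn, mul_comm]
  -- Fourier representation of the convolution
  have hEq1 : (∫ y, mixedKernel N a b s (x - y) t * (u₀ y : ℂ))
      = (((2 * Real.pi) ^ N : ℝ))⁻¹ • ∫ ξ : EuclideanSpace ℝ (Fin N),
          Complex.exp (Complex.I * ((inner ℝ x ξ : ℝ) : ℂ)) * Complex.exp (-((g₁ ξ : ℝ) : ℂ)) * fhat N u₀ ξ := by
    have hFub : Integrable (Function.uncurry fun (y ξ : EuclideanSpace ℝ (Fin N)) =>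
        Complex.exp (Complex.I * ((inner ℝ (x - y) ξ : ℝ) : ℂ)) * Complex.exp (-((g₁ ξ : ℝ) : ℂ)) * (u₀ y : ℂ))
        (volume.prod volume) := by
      apply Integrable.mono' (hInt.abs.mul_prod hint2)
      · apply AEStronglyMeasurable.mul
        · apply Continuous.aestronglyMeasurable
          have hinn : Continuous fun p : EuclideanSpace ℝ (Fin N) × EuclideanSpace ℝ (Fin N) =>
              (inner ℝ (x - p.1) p.2 : ℝ) :=
            Continuous.inner (continuous_const.sub continuous_fst) continuous_snd
          have h1 : Continuous fun p : EuclideanSpace ℝ (Fin N) × EuclideanSpace ℝ (Fin N) =>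
              Complex.exp (Complex.I * ((inner ℝ (x - p.1) p.2 : ℝ) : ℂ)) :=
            Complex.continuous_exp.comp (continuous_const.mul (Complex.continuous_ofReal.comp hinn))
          exact h1.mul (Complex.continuous_exp.comp
            (Complex.continuous_ofReal.comp (hcg₁.comp continuous_snd)).neg)
        · exact Complex.continuous_ofReal.comp_aestronglyMeasurable hInt.1.comp_fst
      · filter_upwards with p
        rw [Function.uncurry, norm_mul,
          show ‖Complex.exp (Complex.I * ((inner ℝ (x - p.1) p.2 : ℝ) : ℂ)) * Complex.exp (-((g₁ p.2 : ℝ) : ℂ))‖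
            = Real.exp (-(g₁ p.2)) from habs_exp p.2 (x - p.1) g₁]
        rw [Complex.norm_real, Real.norm_eq_abs]
        rw [show |u₀ p.1| * Real.exp (-(g₂ p.2)) = Real.exp (-(g₂ p.2)) * |u₀ p.1| from mul_comm _ _]
        apply mul_le_mul_of_nonneg_right _ (abs_nonneg _)
        exact Real.exp_le_exp.mpr (by linarith [hg12 p.2])
    have hker : ∀ y, mixedKernel N a b s (x - y) t * (u₀ y : ℂ) =
        (((2 * Real.pi) ^ N : ℝ))⁻¹ • ∫ ξ : EuclideanSpace ℝ (Fin N),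
          Complex.exp (Complex.I * ((inner ℝ (x - y) ξ : ℝ) : ℂ)) * Complex.exp (-((g₁ ξ : ℝ) : ℂ)) * (u₀ y : ℂ) := by
      intro y
      unfold mixedKernel
      rw [smul_mul_assoc, ← integral_mul_const]
    simp_rw [hker]
    rw [integral_smul]
    congr 1
    rw [integral_integral_swap hFub]
    apply integral_congr_ae
    filter_upwards with ξ
    have hsplit : ∀ y : EuclideanSpace ℝ (Fin N),
        Complex.exp (Complex.I * ((inner ℝ (x - y) ξ : ℝ) : ℂ))
          = Complex.exp (Complex.I * ((inner ℝ x ξ : ℝ) : ℂ)) * Complex.exp (-(Complex.I * ((inner ℝ y ξ : ℝ) : ℂ))) := by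
      intro y
      rw [← Complex.exp_add]
      congr 1
      rw [show (inner ℝ (x - y) ξ : ℝ) = (inner ℝ x ξ : ℝ) - (inner ℝ y ξ : ℝ) from inner_sub_left x y ξ]
      push_cast; ring
    calc ∫ y, Complex.exp (Complex.I * ((inner ℝ (x - y) ξ : ℝ) : ℂ)) * Complex.exp (-((g₁ ξ : ℝ) : ℂ)) * (u₀ y : ℂ)
        = ∫ y, (Complex.exp (Complex.I * ((inner ℝ x ξ : ℝ) : ℂ)) * Complex.exp (-((g₁ ξ : ℝ) : ℂ))) *
            (Complex.exp (-(Complex.I * ((inner ℝ y ξ : ℝ) : ℂ))) * (u₀ y : ℂ)) := by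
          apply integral_congr_ae
          filter_upwards with y
          rw [hsplit y]; ring
      _ = (Complex.exp (Complex.I * ((inner ℝ x ξ : ℝ) : ℂ)) * Complex.exp (-((g₁ ξ : ℝ) : ℂ))) * fhat N u₀ ξ :=
          integral_const_mul _ _
      _ = Complex.exp (Complex.I * ((inner ℝ x ξ : ℝ) : ℂ)) * Complex.exp (-((g₁ ξ : ℝ) : ℂ)) * fhat N u₀ ξ := by ring
  have hEq2 : (M : ℂ) * fracKernel N b s x t
      = (((2 * Real.pi) ^ N : ℝ))⁻¹ • ∫ ξ : EuclideanSpace ℝ (Fin N),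
          Complex.exp (Complex.I * ((inner ℝ x ξ : ℝ) : ℂ)) * Complex.exp (-((g₂ ξ : ℝ) : ℂ)) * (M : ℂ) := by
    unfold fracKernel
    rw [mul_comm, smul_mul_assoc, ← integral_mul_const]
  rw [hEq1, hEq2, ← smul_sub, ← integral_sub hint1' hint2']
  rw [norm_smul, Real.norm_of_nonneg (inv_nonneg.mpr hm.le)]
  apply mul_le_mul_of_nonneg_left _ (inv_nonneg.mpr hm.le)
  refine (norm_integral_le_integral_norm _).trans (le_of_eq ?_)
  apply integral_congr_ae
  filter_upwards with ξ
  have hfactor : Complex.exp (Complex.I * ((inner ℝ x ξ : ℝ) : ℂ)) * Complex.exp (-((g₁ ξ : ℝ) : ℂ)) * fhat N u₀ ξ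
      - Complex.exp (Complex.I * ((inner ℝ x ξ : ℝ) : ℂ)) * Complex.exp (-((g₂ ξ : ℝ) : ℂ)) * (M : ℂ)
      = Complex.exp (Complex.I * ((inner ℝ x ξ : ℝ) : ℂ)) * (((Real.exp (-(g₂ ξ)) : ℝ) : ℂ) *
          ((((Real.exp (-(a * t * ‖ξ‖ ^ 2)) : ℝ) : ℂ)) * fhat N u₀ ξ - (M : ℂ))) := by
    have e1 : Complex.exp (-((g₁ ξ : ℝ) : ℂ)) =
        ((Real.exp (-(a * t * ‖ξ‖ ^ 2)) : ℝ) : ℂ) * ((Real.exp (-(g₂ ξ)) : ℝ) : ℂ) := by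
      rw [← Complex.ofReal_mul, ← Real.exp_add, show (-(a * t * ‖ξ‖ ^ 2) + -(g₂ ξ)) = -(g₁ ξ) by
        simp only [hg₁, hg₂]; ring]
      rw [Complex.ofReal_exp, Complex.ofReal_neg]
    have e2 : Complex.exp (-((g₂ ξ : ℝ) : ℂ)) = ((Real.exp (-(g₂ ξ)) : ℝ) : ℂ) := by
      rw [Complex.ofReal_exp, Complex.ofReal_neg]
    rw [e1, e2]; ring
  rw [hfactor, norm_mul, norm_mul]
  rw [show ‖Complex.exp (Complex.I * ((inner ℝ x ξ : ℝ) : ℂ))‖ = 1 from abs_exp_I_mul' _, one_mul]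
  rw [Complex.norm_real, Real.norm_of_nonneg (Real.exp_pos _).le]

/-- Large-time asymptotics of the linear mixed local-nonlocal heat equation:
`t^{N/(2s)} ‖u(·,t) - M K_s(·,t)‖_{L^∞} → 0` as `t → ∞`. -/
theorem mixed_heat_asymptotics
    (N : ℕ) (hN : 1 ≤ N) (a b s : ℝ) (ha : 0 < a) (hb : 0 < b)
    (hs : s ∈ Set.Ioo (0 : ℝ) 1)
    (u₀ : EuclideanSpace ℝ (Fin N) → ℝ)
    (hInt : Integrable u₀) (hBdd : MemLp u₀ ⊤)
    (hpos : ∀ x, 0 ≤ u₀ x) (hnt : ¬ u₀ =ᵐ[volume] 0)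
    (M : ℝ) (hM : M = ∫ x, u₀ x)
    (u : EuclideanSpace ℝ (Fin N) → ℝ → ℂ)
    (hu : ∀ x, ∀ t > (0 : ℝ), u x t = ∫ y, mixedKernel N a b s (x - y) t * (u₀ y : ℂ)) :
    ∀ ε > (0 : ℝ), ∃ T > (0 : ℝ), ∀ t ≥ T, ∀ x,
      t ^ ((N : ℝ) / (2 * s)) *
        ‖u x t - (M : ℂ) * fracKernel N b s x t‖ ≤ ε := by
  obtain ⟨hs0, hs1⟩ := hs
  intro ε hε
  have h2s : (0:ℝ) < 2 * s := by linarith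
  have hm : (0:ℝ) < (2 * Real.pi) ^ N := by positivity
  have hMnn : 0 ≤ M := hM ▸ integral_nonneg hpos
  have hcont := fhat_continuous N u₀ hInt
  have habs : ∀ ξ, ‖fhat N u₀ ξ‖ ≤ M := fun ξ => hM ▸ fhat_abs_le N u₀ hpos ξ
  have hf0 : fhat N u₀ 0 = (M : ℂ) := by rw [fhat_zero, hM]
  set R : ℝ → ℝ := fun t => t ^ (-(1/(2*s))) with hRdef
  set Φ : ℝ → EuclideanSpace ℝ (Fin N) → ℝ := fun t ξ =>
    Real.exp (-(b * ‖ξ‖ ^ (2 * s) * t)) *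
      ‖((Real.exp (-(a * t * ‖ξ‖ ^ 2)) : ℝ) : ℂ) * fhat N u₀ ξ - (M : ℂ)‖ with hΦdef
  set H : ℝ → ℝ := fun t => ∫ η : EuclideanSpace ℝ (Fin N), Φ t (R t • η) with hHdef
  -- pointwise computation of the rescaled integrand
  have hΦR : ∀ t > (0:ℝ), ∀ η : EuclideanSpace ℝ (Fin N), Φ t (R t • η) =
      Real.exp (-(b * ‖η‖ ^ (2 * s))) *
        ‖((Real.exp (-(a * t ^ (1 - 1/s) * ‖η‖ ^ 2)) : ℝ) : ℂ) * fhat N u₀ (R t • η) - (M : ℂ)‖ := by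
    intro t ht η
    have hRt : 0 < R t := Real.rpow_pos_of_pos ht _
    have hnorm : ‖R t • η‖ = R t * ‖η‖ := by
      rw [norm_smul, Real.norm_eq_abs, abs_of_pos hRt]
    have hA : b * ‖R t • η‖ ^ (2 * s) * t = b * ‖η‖ ^ (2 * s) := by
      rw [hnorm, Real.mul_rpow hRt.le (norm_nonneg _), hRdef]
      rw [← Real.rpow_mul ht.le]
      rw [show -(1/(2*s)) * (2*s) = -1 by field_simp]
      rw [Real.rpow_neg_one]
      field_simp
    have hB : a * t * ‖R t • η‖ ^ 2 = a * t ^ (1 - 1/s) * ‖η‖ ^ 2 := by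
      rw [hnorm, mul_pow, hRdef]
      rw [show ((t ^ (-(1/(2*s)))) ^ 2 : ℝ) = (t ^ (-(1/(2*s)))) ^ ((2:ℕ):ℝ) from
        (Real.rpow_natCast _ 2).symm]
      rw [← Real.rpow_mul ht.le]
      rw [show -(1/(2*s)) * ((2:ℕ):ℝ) = -(1/s) by push_cast; field_simp]
      rw [show a * t * (t ^ (-(1/s)) * ‖η‖^2) = a * (t * t ^ (-(1/s))) * ‖η‖^2 by ring]
      rw [show (1 - 1/s : ℝ) = 1 + (-(1/s)) by ring, Real.rpow_add ht, Real.rpow_one]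
    rw [hΦdef]
    simp only
    rw [hA, hB]
  -- scaling inequality
  have hHnn : ∀ t, 0 ≤ H t := fun t => integral_nonneg fun η => by
    rw [hΦdef]; positivity
  have hscale : ∀ t > (0:ℝ), ∀ x, t ^ ((N : ℝ) / (2 * s)) *
      ‖u x t - (M : ℂ) * fracKernel N b s x t‖ ≤ ((2 * Real.pi) ^ N)⁻¹ * H t := by
    intro t ht x
    have hRt : 0 < R t := Real.rpow_pos_of_pos ht _
    have h1 : ‖u x t - (M : ℂ) * fracKernel N b s x t‖
        ≤ ((2 * Real.pi) ^ N : ℝ)⁻¹ * ∫ ξ, Φ t ξ := by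
      rw [hu x t ht]
      exact key_repr N a b s t ha hb hs0 ht u₀ hInt hpos M hM x
    have h2 : H t = ((R t) ^ N)⁻¹ * ∫ ξ, Φ t ξ := by
      rw [hHdef]
      simp only
      rw [MeasureTheory.Measure.integral_comp_smul_of_nonneg (μ := volume) (Φ t) (R t) (hR := hRt.le)]
      rw [finrank_euclideanSpace_fin, smul_eq_mul]
    have h3 : ∫ ξ, Φ t ξ = (R t) ^ N * H t := by
      rw [h2]
      field_simp
    have h4 : t ^ ((N : ℝ) / (2 * s)) * (R t) ^ N = 1 := by
      rw [hRdef]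
      simp only
      rw [← Real.rpow_natCast (t ^ (-(1/(2*s)))) N, ← Real.rpow_mul ht.le, ← Real.rpow_add ht]
      rw [show (N : ℝ) / (2*s) + -(1/(2*s)) * (N:ℝ) = 0 by field_simp; ring]
      exact Real.rpow_zero t
    calc t ^ ((N : ℝ) / (2 * s)) * ‖u x t - (M : ℂ) * fracKernel N b s x t‖
        ≤ t ^ ((N : ℝ) / (2 * s)) * (((2 * Real.pi) ^ N : ℝ)⁻¹ * ((R t) ^ N * H t)) := by
          rw [← h3]
          exact mul_le_mul_of_nonneg_left h1 (Real.rpow_nonneg ht.le _)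
      _ = (t ^ ((N : ℝ) / (2 * s)) * (R t) ^ N) * (((2 * Real.pi) ^ N : ℝ)⁻¹ * H t) := by ring
      _ = ((2 * Real.pi) ^ N : ℝ)⁻¹ * H t := by rw [h4, one_mul]
  -- the limit of H
  have hlim : Tendsto H atTop (𝓝 0) := by
    have h0 : (0:ℝ) = ∫ (_ : EuclideanSpace ℝ (Fin N)), (0:ℝ) := by simp
    rw [hHdef, h0]
    apply tendsto_integral_filter_of_dominated_convergence
      (bound := fun η : EuclideanSpace ℝ (Fin N) => Real.exp (-(b * ‖η‖ ^ (2 * s))) * (M + M))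
    · filter_upwards [eventually_gt_atTop (0:ℝ)] with t ht
      apply Continuous.aestronglyMeasurable
      have hsmul : Continuous fun η : EuclideanSpace ℝ (Fin N) => R t • η := continuous_const_smul _
      have hΦcont : Continuous (Φ t) := by
        rw [hΦdef]
        apply Continuous.mul
        · exact Real.continuous_exp.comp ((continuous_const.mul
            (continuous_norm.rpow_const fun _ => Or.inr h2s.le)).mul continuous_const).neg
        · apply continuous_norm.comp
          apply Continuous.sub _ continuous_const
          apply Continuous.mul _ hcont
          exact Complex.continuous_ofReal.comp (Real.continuous_exp.comp
            ((continuous_const.mul (continuous_norm.pow 2)).neg))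
      exact hΦcont.comp hsmul
    · filter_upwards [eventually_gt_atTop (0:ℝ)] with t ht
      filter_upwards with η
      rw [hΦR t ht η]
      have he1 : Real.exp (-(a * t ^ (1 - 1/s) * ‖η‖ ^ 2)) ≤ 1 := by
        rw [Real.exp_le_one_iff]
        have : 0 ≤ t ^ (1 - 1/s) := Real.rpow_nonneg ht.le _
        have : 0 ≤ a * t ^ (1 - 1/s) * ‖η‖ ^ 2 := by positivity
        linarith
      have habs2 : ‖((Real.exp (-(a * t ^ (1 - 1/s) * ‖η‖ ^ 2)) : ℝ) : ℂ) *
          fhat N u₀ (R t • η) - (M : ℂ)‖ ≤ M + M := by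
        refine (norm_sub_le _ _).trans ?_
        rw [norm_mul, Complex.norm_real, Real.norm_of_nonneg (Real.exp_pos _).le,
          Complex.norm_real, Real.norm_of_nonneg hMnn]
        have hf : ‖fhat N u₀ (R t • η)‖ ≤ M := by
          exact habs _
        nlinarith [norm_nonneg (fhat N u₀ (R t • η)), Real.exp_pos (-(a * t ^ (1 - 1/s) * ‖η‖ ^ 2))]
      rw [Real.norm_of_nonneg (by positivity)]
      exact mul_le_mul_of_nonneg_left habs2 (Real.exp_pos _).le
    · exact (aux_integrable hb h2s).mul_const _
    · filter_upwards with η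
      have hT1 : Tendsto (fun t : ℝ => t ^ (1 - 1/s)) atTop (𝓝 0) := by
        rw [show (1 - 1/s : ℝ) = -(1/s - 1) by ring]
        apply tendsto_rpow_neg_atTop
        rw [lt_sub_iff_add_lt, zero_add, lt_div_iff₀ hs0, one_mul]
        exact hs1
      have hT2 : Tendsto (fun t : ℝ => -(a * t ^ (1 - 1/s) * ‖η‖ ^ 2)) atTop (𝓝 0) := by
        have := (hT1.const_mul a).mul_const (‖η‖ ^ 2)
        rw [mul_zero, zero_mul] at this
        simpa using this.neg
      have hT3 : Tendsto (fun t : ℝ => ((Real.exp (-(a * t ^ (1 - 1/s) * ‖η‖ ^ 2)) : ℝ) : ℂ))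
          atTop (𝓝 1) := by
        have h := (Real.continuous_exp.tendsto 0).comp hT2
        rw [Real.exp_zero] at h
        have h2 := (Complex.continuous_ofReal.tendsto 1).comp h
        rw [Complex.ofReal_one] at h2
        exact h2
      have hT4 : Tendsto (fun t : ℝ => R t • η) atTop (𝓝 0) := by
        have h := (tendsto_rpow_neg_atTop (show (0:ℝ) < 1/(2*s) by positivity)).smul_const η
        rw [zero_smul] at h
        exact h
      have hT5 : Tendsto (fun t : ℝ => fhat N u₀ (R t • η)) atTop (𝓝 (M : ℂ)) := by
        have := (hcont.tendsto 0).comp hT4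
        rwa [hf0] at this
      have hT6 : Tendsto (fun t : ℝ => ((Real.exp (-(a * t ^ (1 - 1/s) * ‖η‖ ^ 2)) : ℝ) : ℂ) *
          fhat N u₀ (R t • η) - (M : ℂ)) atTop (𝓝 0) := by
        have := (hT3.mul hT5).sub (tendsto_const_nhds (x := (M:ℂ)))
        rwa [one_mul, sub_self] at this
      have hT7 : Tendsto (fun t : ℝ => ‖((Real.exp (-(a * t ^ (1 - 1/s) * ‖η‖ ^ 2)) : ℝ) : ℂ) *
          fhat N u₀ (R t • η) - (M : ℂ)‖) atTop (𝓝 0) := by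
        have h2 := (continuous_norm.tendsto 0).comp hT6
        rw [norm_zero] at h2
        exact h2
      have hT8 := hT7.const_mul (Real.exp (-(b * ‖η‖ ^ (2 * s))))
      rw [mul_zero] at hT8
      apply hT8.congr'
      filter_upwards [eventually_gt_atTop (0:ℝ)] with t ht
      exact (hΦR t ht η).symm
  -- conclusion
  have hev : ∀ᶠ t in atTop, ((2 * Real.pi) ^ N : ℝ)⁻¹ * H t ≤ ε := by
    exact (hlim.const_mul (((2 * Real.pi) ^ N : ℝ)⁻¹)).eventually (eventually_le_nhds
      (show ((2 * Real.pi) ^ N : ℝ)⁻¹ * 0 < ε by rw [mul_zero]; exact hε))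
  obtain ⟨T₀, hT₀⟩ := eventually_atTop.mp hev
  refine ⟨max T₀ 1, lt_of_lt_of_le one_pos (le_max_right _ _), fun t htT x => ?_⟩
  have ht0 : (0:ℝ) < t := lt_of_lt_of_le one_pos ((le_max_right _ _).trans htT)
  exact (hscale t ht0 x).trans (hT₀ t ((le_max_left _ _).trans htT))
end

section
/- Let N ≥ 1, a, b > 0, s ∈ (0,1), u₀ ∈ L¹(ℝᴺ), and define u(x,t) = ∫_{ℝᴺ} P(x−y,t) u₀(y) dy for t > 0. Then for every t > 0, sup_{x∈ℝᴺ} |u(x,t)| ≤ (2π)^{−N} · (∫_{ℝᴺ} e^{−b|z|^{2s}} dz) · t^{−N/(2s)} · ‖u₀‖_{L¹(ℝᴺ)}. -/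
open MeasureTheory Filter


lemma integrable_exp_neg_mul_rpow_norm (N : ℕ) {c p : ℝ} (hc : 0 < c) (hp : 0 < p) :
    Integrable (fun x : EuclideanSpace ℝ (Fin N) => Real.exp (-(c * ‖x‖ ^ p))) := by
  set E := EuclideanSpace ℝ (Fin N)
  set r : ℝ := (N : ℝ) + 1 with hr_def
  have hr0 : 0 < r := by positivity
  set h : E → ℝ := fun x => (1 + ‖x‖) ^ r * Real.exp (-(c * ‖x‖ ^ p)) with hh
  have hcont : Continuous h := by
    apply Continuous.mul
    · exact (continuous_const.add continuous_norm).rpow_const (fun x => Or.inr hr0.le)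
    · exact Real.continuous_exp.comp
        ((continuous_const.mul (continuous_norm.rpow_const (fun x => Or.inr hp.le))).neg)
  have h2 : Tendsto (fun y : ℝ => 2 ^ r * ((y ^ p) ^ (r / p) * Real.exp (-c * y ^ p)))
      atTop (nhds 0) := by
    simpa using
      (((tendsto_rpow_mul_exp_neg_mul_atTop_nhds_zero (r / p) c hc).comp
        (tendsto_rpow_atTop hp)).const_mul ((2:ℝ) ^ r))
  have h1 : Tendsto (fun y : ℝ => (1 + y) ^ r * Real.exp (-(c * y ^ p))) atTop (nhds 0) := by
    apply squeeze_zero' ?_ ?_ h2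
    · filter_upwards [eventually_ge_atTop (0 : ℝ)] with y hy
      positivity
    · filter_upwards [eventually_ge_atTop (1 : ℝ)] with y hy
      have hy0 : (0 : ℝ) ≤ y := le_trans zero_le_one hy
      have e1 : (y ^ p) ^ (r / p) = y ^ r := by
        rw [← Real.rpow_mul hy0]
        congr 1
        field_simp
      rw [e1, neg_mul, ← mul_assoc]
      apply mul_le_mul_of_nonneg_right ?_ (Real.exp_nonneg _)
      calc (1 + y) ^ r ≤ (2 * y) ^ r :=
            Real.rpow_le_rpow (by linarith) (by linarith) hr0.le
        _ = 2 ^ r * y ^ r := Real.mul_rpow (by norm_num) hy0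
  have htends : Tendsto h (cocompact E) (nhds 0) :=
    h1.comp tendsto_norm_cocompact_atTop
  have h0 : h 0 = 1 := by
    simp [hh, Real.zero_rpow hp.ne']
  obtain ⟨x₀, hx₀⟩ : ∃ x₀ : E, ∀ y : E, h y ≤ h x₀ := by
    apply hcont.exists_forall_ge' 0
    rw [h0]
    exact htends.eventually (eventually_le_nhds one_pos)
  have hmono : ∀ x : E, Real.exp (-(c * ‖x‖ ^ p)) ≤ h x₀ * (1 + ‖x‖) ^ (-r) := by
    intro x
    have h1x : (0:ℝ) < 1 + ‖x‖ := by positivity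
    have h1r : (0:ℝ) < (1 + ‖x‖) ^ r := Real.rpow_pos_of_pos h1x r
    rw [Real.rpow_neg h1x.le, mul_comm (h x₀), ← div_eq_inv_mul, le_div_iff₀ h1r]
    calc Real.exp (-(c * ‖x‖ ^ p)) * (1 + ‖x‖) ^ r = h x := by rw [hh]; ring
      _ ≤ h x₀ := hx₀ x
  have hint : Integrable (fun x : E => h x₀ * (1 + ‖x‖) ^ (-r)) := by
    apply Integrable.const_mul
    apply integrable_one_add_norm (E := E)
    rw [hr_def]; simp [E, finrank_euclideanSpace]
  refine hint.mono' ?_ ?_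
  · exact (Real.continuous_exp.comp
      ((continuous_const.mul (continuous_norm.rpow_const (fun x => Or.inr hp.le))).neg)).aestronglyMeasurable
  · filter_upwards with x
    rw [Real.norm_eq_abs, abs_of_nonneg (Real.exp_nonneg _)]
    exact hmono x

lemma mixedKernel_bound (N : ℕ) {a b s t : ℝ} (ha : 0 < a) (hb : 0 < b)
    (hs : s ∈ Set.Ioo (0 : ℝ) 1) (ht : 0 < t) (x : EuclideanSpace ℝ (Fin N)) :
    ‖mixedKernel N a b s x t‖ ≤
      (((2 * Real.pi) ^ N : ℝ))⁻¹ *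
        (∫ z : EuclideanSpace ℝ (Fin N), Real.exp (-(b * ‖z‖ ^ (2 * s)))) *
          t ^ (-(N : ℝ) / (2 * s)) := by
  have h2s : (0:ℝ) < 2 * s := by nlinarith [hs.1]
  have hc0 : (0:ℝ) ≤ (((2 * Real.pi) ^ N : ℝ))⁻¹ := by positivity
  rw [mixedKernel, norm_smul, Real.norm_eq_abs, abs_of_nonneg hc0, mul_assoc]
  apply mul_le_mul_of_nonneg_left ?_ hc0
  refine le_trans (norm_integral_le_integral_norm _) ?_
  have hnorm : ∀ ξ : EuclideanSpace ℝ (Fin N),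
      ‖Complex.exp (Complex.I * ((inner ℝ x ξ : ℝ) : ℂ)) *
        Complex.exp (-(((a * ‖ξ‖ ^ 2 + b * ‖ξ‖ ^ (2 * s)) * t : ℝ) : ℂ))‖
      = Real.exp (-((a * ‖ξ‖ ^ 2 + b * ‖ξ‖ ^ (2 * s)) * t)) := by
    intro ξ
    rw [norm_mul, Complex.norm_exp, Complex.norm_exp]
    simp only [Complex.neg_re, Complex.ofReal_re, Complex.mul_re, Complex.I_re, Complex.I_im,
      Complex.ofReal_im, zero_mul, one_mul, mul_zero, sub_zero, zero_sub, neg_zero,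
      Real.exp_zero, one_mul]
  simp only [hnorm]
  refine le_trans (integral_mono_of_nonneg ?_ (integrable_exp_neg_mul_rpow_norm N (c := b*t) (by positivity) h2s) ?_) ?_
  · filter_upwards with ξ; positivity
  · filter_upwards with ξ
    apply Real.exp_le_exp.2
    have h1 : (0:ℝ) ≤ ‖ξ‖ ^ (2*s) := Real.rpow_nonneg (norm_nonneg ξ) _
    nlinarith [mul_nonneg (mul_nonneg ha.le (sq_nonneg ‖ξ‖)) ht.le]
  -- change of variables
  set R : ℝ := t ^ (-(1:ℝ) / (2 * s)) with hR
  have hRpos : 0 < R := Real.rpow_pos_of_pos ht _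
  have key : ∀ z : EuclideanSpace ℝ (Fin N), Real.exp (-((b * t) * ‖R • z‖ ^ (2 * s)))
      = Real.exp (-(b * ‖z‖ ^ (2 * s))) := by
    intro z
    have hns : ‖R • z‖ ^ (2*s) = t⁻¹ * ‖z‖ ^ (2*s) := by
      rw [norm_smul, Real.norm_eq_abs, abs_of_pos hRpos,
        Real.mul_rpow hRpos.le (norm_nonneg z), hR, ← Real.rpow_mul ht.le,
        show -(1:ℝ) / (2 * s) * (2 * s) = -1 by field_simp [hs.1.ne'], Real.rpow_neg_one]
    rw [hns]
    congr 1
    field_simp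
  have hcv := MeasureTheory.Measure.integral_comp_smul_of_nonneg
    (volume : Measure (EuclideanSpace ℝ (Fin N)))
    (fun ξ : EuclideanSpace ℝ (Fin N) => Real.exp (-((b * t) * ‖ξ‖ ^ (2 * s)))) R (hR := hRpos.le)
  simp only [key] at hcv
  have hfr : Module.finrank ℝ (EuclideanSpace ℝ (Fin N)) = N := finrank_euclideanSpace_fin
  rw [hfr, smul_eq_mul] at hcv
  have hRN : R ^ N = t ^ (-(N : ℝ) / (2 * s)) := by
    rw [hR, ← Real.rpow_natCast (t ^ (-(1:ℝ) / (2 * s))) N, ← Real.rpow_mul ht.le]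
    congr 1
    field_simp
  rw [← hRN]
  have hRNpos : 0 < R ^ N := pow_pos hRpos N
  rw [eq_comm, inv_mul_eq_iff_eq_mul₀ hRNpos.ne'] at hcv
  rw [hcv]
  ring_nf
  exact le_refl _

/-- `L^∞`-decay estimate for the solution of the linear Cauchy problem
`u_t = aΔu - b(-Δ)^s u`:
`‖u(·,t)‖_∞ ≤ (2π)^{-N} (∫ e^{-b|z|^{2s}} dz) t^{-N/(2s)} ‖u₀‖_{L¹}`. -/
theorem mixed_heat_decay
    (N : ℕ) (hN : 1 ≤ N) (a b s : ℝ) (ha : 0 < a) (hb : 0 < b)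
    (hs : s ∈ Set.Ioo (0 : ℝ) 1)
    (u₀ : EuclideanSpace ℝ (Fin N) → ℝ) (hInt : Integrable u₀)
    (u : EuclideanSpace ℝ (Fin N) → ℝ → ℂ)
    (hu : ∀ x, ∀ t > (0 : ℝ), u x t = ∫ y, mixedKernel N a b s (x - y) t * (u₀ y : ℂ)) :
    ∀ t > (0 : ℝ), ∀ x,
      ‖u x t‖ ≤
        (((2 * Real.pi) ^ N : ℝ))⁻¹ *
          (∫ z : EuclideanSpace ℝ (Fin N), Real.exp (-(b * ‖z‖ ^ (2 * s)))) *
            t ^ (-(N : ℝ) / (2 * s)) * ∫ y, |u₀ y| := by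
  intro t ht x
  set C : ℝ := (((2 * Real.pi) ^ N : ℝ))⁻¹ *
    (∫ z : EuclideanSpace ℝ (Fin N), Real.exp (-(b * ‖z‖ ^ (2 * s)))) *
      t ^ (-(N : ℝ) / (2 * s)) with hC
  have hC0 : 0 ≤ C := le_trans (norm_nonneg _) (mixedKernel_bound N ha hb hs ht x)
  rw [hu x t ht]
  calc ‖∫ y, mixedKernel N a b s (x - y) t * (u₀ y : ℂ)‖
      ≤ ∫ y, ‖mixedKernel N a b s (x - y) t * (u₀ y : ℂ)‖ :=
        norm_integral_le_integral_norm _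
    _ ≤ ∫ y, C * |u₀ y| := by
        apply integral_mono_of_nonneg
        · filter_upwards with y; positivity
        · exact hInt.abs.const_mul C
        · filter_upwards with y
          rw [norm_mul, Complex.norm_real, Real.norm_eq_abs]
          exact mul_le_mul_of_nonneg_right (mixedKernel_bound N ha hb hs ht (x - y))
            (abs_nonneg _)
    _ = C * ∫ y, |u₀ y| := integral_const_mul C _
end

section
/- Let p > 1, λ > 0, T > 0, and let J : [0,T) → ℝ be differentiable with J(0) > λ^{1/(p−1)} and J′(t) ≥ J(t)^p − λ J(t) for all t ∈ [0,T). Then T ≤ −(1/((p−1)λ)) · log(1 − λ · J(0)^{1−p}). In particular, J cannot be defined on all of [0,∞): solutions of the differential inequality with supercritical initial value blow up in finite time. -/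
open MeasureTheory Filter

open Set in
lemma gronwall_aux (p lam : ℝ) (hp : 1 < p) (hlam : 0 < lam)
    (J J' : ℝ → ℝ) (s : ℝ) (hs : 0 ≤ s)
    (hderiv : ∀ t ∈ Set.Icc (0:ℝ) s, HasDerivAt J (J' t) t)
    (hineq : ∀ t ∈ Set.Icc (0:ℝ) s, J' t ≥ J t ^ p - lam * J t)
    (hpos : ∀ t ∈ Set.Icc (0:ℝ) s, 0 < J t) :
    Real.exp (-((p-1)*lam*s)) * (lam * J s ^ (1-p) - 1) ≤ lam * J 0 ^ (1-p) - 1 := by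
  set F : ℝ → ℝ := fun t => Real.exp (-((p-1)*lam*t)) * (lam * J t ^ (1-p) - 1) with hF
  have hFd : ∀ x ∈ Set.Icc (0:ℝ) s, HasDerivAt F
      (Real.exp (-((p-1)*lam*x)) * (-((p-1)*lam)) * (lam * J x ^ (1-p) - 1)
        + Real.exp (-((p-1)*lam*x)) * (lam * (J' x * (1-p) * J x ^ (1-p-1)))) x := by
    intro x hx
    have h1 : HasDerivAt (fun t : ℝ => -((p-1)*lam*t)) (-((p-1)*lam)) x := by
      simpa [Pi.neg_def] using ((hasDerivAt_id x).const_mul ((p-1)*lam)).neg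
    have h2 := h1.exp
    have h3 : HasDerivAt (fun t => J t ^ (1-p)) (J' x * (1-p) * J x ^ (1-p-1)) x :=
      (hderiv x hx).rpow_const (Or.inl (hpos x hx).ne')
    have h4 := ((h3.const_mul lam).sub_const 1)
    exact h2.mul h4
  have hanti : AntitoneOn F (Set.Icc 0 s) := by
    apply antitoneOn_of_deriv_nonpos (convex_Icc 0 s)
    · exact fun x hx => (hFd x hx).continuousAt.continuousWithinAt
    · intro x hx
      rw [interior_Icc] at hx
      exact (hFd x (Ioo_subset_Icc_self hx)).differentiableAt.differentiableWithinAt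
    · intro x hx
      rw [interior_Icc] at hx
      have hx' : x ∈ Set.Icc (0:ℝ) s := Ioo_subset_Icc_self hx
      rw [(hFd x hx').deriv]
      have hJx := hpos x hx'
      have hexp : (0:ℝ) < Real.exp (-((p-1)*lam*x)) := Real.exp_pos _
      have hJp : (0:ℝ) < J x ^ (-p) := Real.rpow_pos_of_pos hJx _
      have key : J x ^ (-p) * J' x ≥ 1 - lam * J x ^ (1-p) := by
        have h5 : J x ^ (-p) * J' x ≥ J x ^ (-p) * (J x ^ p - lam * J x) :=
          mul_le_mul_of_nonneg_left (hineq x hx') hJp.le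
        have e1 : J x ^ (-p) * J x ^ p = 1 := by
          rw [← Real.rpow_add hJx]; simp
        have e2 : J x ^ (-p) * J x = J x ^ (1-p) := by
          nth_rewrite 2 [← Real.rpow_one (J x)]
          rw [← Real.rpow_add hJx]; ring_nf
        calc J x ^ (-p) * J' x ≥ J x ^ (-p) * (J x ^ p - lam * J x) := h5
          _ = J x ^ (-p) * J x ^ p - lam * (J x ^ (-p) * J x) := by ring
          _ = 1 - lam * J x ^ (1-p) := by rw [e1, e2]
      have he : (1:ℝ) - p - 1 = -p := by ring
      rw [he]
      have hk : (0:ℝ) < (p-1)*lam := mul_pos (by linarith) hlam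
      nlinarith [mul_le_mul_of_nonneg_left key (mul_pos hexp hk).le]
  have h := hanti (Set.left_mem_Icc.2 hs) (Set.right_mem_Icc.2 hs) hs
  simpa [hF] using h

/-- Kaplan's ODE lemma: if `J' ≥ J^p - λJ` on `[0,T)` and
`J(0) > λ^{1/(p-1)}`, then `T ≤ -(1/((p-1)λ)) log(1 - λ J(0)^{1-p})`;
in particular `J` blows up in finite time. -/
theorem kaplan_ode_blowup
    (p lam T : ℝ) (hp : 1 < p) (hlam : 0 < lam) (hT : 0 < T)
    (J J' : ℝ → ℝ)
    (hderiv : ∀ t ∈ Set.Ico (0 : ℝ) T, HasDerivAt J (J' t) t)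
    (hineq : ∀ t ∈ Set.Ico (0 : ℝ) T, J' t ≥ J t ^ p - lam * J t)
    (h0 : J 0 > lam ^ (1 / (p - 1))) :
    T ≤ -(1 / ((p - 1) * lam)) * Real.log (1 - lam * J 0 ^ (1 - p)) := by
  have hp1 : (0:ℝ) < p - 1 := by linarith
  set k : ℝ := (p - 1) * lam with hkdef
  have hk : 0 < k := mul_pos hp1 hlam
  set c : ℝ := lam ^ (1 / (p - 1)) with hcdef
  have hc : 0 < c := Real.rpow_pos_of_pos hlam _
  have hcinv : c ^ (1 - p) = lam⁻¹ := by
    rw [hcdef, ← Real.rpow_mul hlam.le]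
    have he : 1 / (p - 1) * (1 - p) = -1 := by
      field_simp
      ring
    rw [he, Real.rpow_neg_one]
  -- J 0 ^ (1-p) < lam⁻¹
  have hJ0 : 0 < J 0 := lt_trans hc h0
  have hH0 : J 0 ^ (1 - p) < lam⁻¹ := by
    rw [← hcinv]
    exact Real.rpow_lt_rpow_of_neg hc h0 (by linarith)
  have hH0pos : 0 < J 0 ^ (1 - p) := Real.rpow_pos_of_pos hJ0 _
  set A : ℝ := 1 - lam * J 0 ^ (1 - p) with hAdef
  have hA0 : 0 < A := by
    have := (mul_lt_mul_iff_right₀ hlam).2 hH0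
    rw [mul_inv_cancel₀ hlam.ne'] at this
    simpa [hAdef] using by linarith
  have hA1 : A < 1 := by
    have : 0 < lam * J 0 ^ (1 - p) := mul_pos hlam hH0pos
    simp only [hAdef]; linarith
  have hlogA : Real.log A < 0 := Real.log_neg hA0 hA1
  have hbound : 0 < -(1 / k) * Real.log A := by
    have : 0 < 1 / k := by positivity
    nlinarith
  -- main claim
  have claim : ∀ s ∈ Set.Ico (0:ℝ) T, s < -(1 / k) * Real.log A := by
    intro s hsmem
    obtain ⟨hs0, hsT⟩ := hsmem
    have hsub : Set.Icc (0:ℝ) s ⊆ Set.Ico (0:ℝ) T :=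
      fun t ht => ⟨ht.1, lt_of_le_of_lt ht.2 hsT⟩
    -- positivity: c < J t on [0, s]
    have hgt : ∀ t ∈ Set.Icc (0:ℝ) s, c < J t := by
      by_contra hcon
      push_neg at hcon
      obtain ⟨t₁, ht₁mem, ht₁le⟩ := hcon
      set S : Set ℝ := {t ∈ Set.Icc (0:ℝ) s | J t ≤ c} with hSdef
      have hScl : IsClosed S := by
        have hcontJ : ContinuousOn J (Set.Icc 0 s) := fun t ht =>
          (hderiv t (hsub ht)).continuousAt.continuousWithinAt
        have : S = Set.Icc (0:ℝ) s ∩ J ⁻¹' Set.Iic c := by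
          ext t; simp [hSdef, Set.mem_sep_iff]
        rw [this]
        exact hcontJ.preimage_isClosed_of_isClosed isClosed_Icc isClosed_Iic
      have hSne : S.Nonempty := ⟨t₁, ht₁mem, ht₁le⟩
      have hSbdd : BddBelow S := ⟨0, fun t ht => ht.1.1⟩
      set t₀ : ℝ := sInf S with ht₀def
      have ht₀S : t₀ ∈ S := hScl.csInf_mem hSne hSbdd
      have ht₀mem : t₀ ∈ Set.Icc (0:ℝ) s := ht₀S.1
      have ht₀le : J t₀ ≤ c := ht₀S.2
      have ht₀pos : 0 < t₀ := by
        rcases lt_or_eq_of_le ht₀mem.1 with h | h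
        · exact h
        · exfalso; rw [← h] at ht₀le; linarith [h0]
      have hlt : ∀ t ∈ Set.Ico (0:ℝ) t₀, c < J t := by
        intro t ht
        by_contra hle
        push_neg at hle
        have : t ∈ S := ⟨⟨ht.1, le_trans ht.2.le ht₀mem.2⟩, hle⟩
        exact absurd (csInf_le hSbdd this) (not_le.2 ht.2)
      -- J t₀ ≥ c by continuity from the left
      have ht₀ge : c ≤ J t₀ := by
        have hcont : ContinuousAt J t₀ :=
          (hderiv t₀ (hsub ht₀mem)).continuousAt
        have htend : Tendsto J (nhdsWithin t₀ (Set.Iio t₀)) (nhds (J t₀)) :=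
          hcont.tendsto.mono_left nhdsWithin_le_nhds
        refine ge_of_tendsto htend ?_
        filter_upwards [Ioo_mem_nhdsLT_of_mem (Set.mem_Ioc.2 ⟨ht₀pos, le_refl t₀⟩)] with t ht
        exact (hlt t ⟨ht.1.le, ht.2⟩).le
      have ht₀eq : J t₀ = c := le_antisymm ht₀le ht₀ge
      -- apply gronwall on [0, t₀]
      have hsub2 : Set.Icc (0:ℝ) t₀ ⊆ Set.Icc (0:ℝ) s :=
        Set.Icc_subset_Icc le_rfl ht₀mem.2
      have hposI : ∀ t ∈ Set.Icc (0:ℝ) t₀, 0 < J t := by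
        intro t ht
        rcases lt_or_eq_of_le ht.2 with h | h
        · exact lt_trans hc (hlt t ⟨ht.1, h⟩)
        · rw [h, ht₀eq]; exact hc
      have hG := gronwall_aux p lam hp hlam J J' t₀ ht₀pos.le
        (fun t ht => hderiv t (hsub (hsub2 ht)))
        (fun t ht => hineq t (hsub (hsub2 ht))) hposI
      rw [ht₀eq, hcinv, mul_inv_cancel₀ hlam.ne'] at hG
      simp only [sub_self, mul_zero] at hG
      -- hG : 0 ≤ lam * J 0 ^ (1-p) - 1, but lam * J0^(1-p) < 1
      have := (mul_lt_mul_iff_right₀ hlam).2 hH0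
      rw [mul_inv_cancel₀ hlam.ne'] at this
      linarith
    have hposAll : ∀ t ∈ Set.Icc (0:ℝ) s, 0 < J t :=
      fun t ht => lt_trans hc (hgt t ht)
    have hG := gronwall_aux p lam hp hlam J J' s hs0
      (fun t ht => hderiv t (hsub ht)) (fun t ht => hineq t (hsub ht)) hposAll
    have hHs : 0 < J s ^ (1 - p) :=
      Real.rpow_pos_of_pos (hposAll s (Set.right_mem_Icc.2 hs0)) _
    have hexp : (0:ℝ) < Real.exp (-((p-1)*lam*s)) := Real.exp_pos _
    -- exp(-(k s)) > A
    have hAlt : A < Real.exp (-(k * s)) := by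
      have h1 : Real.exp (-((p-1)*lam*s)) * (-1) < Real.exp (-((p-1)*lam*s)) * (lam * J s ^ (1-p) - 1) := by
        have : (-1:ℝ) < lam * J s ^ (1-p) - 1 := by nlinarith [mul_pos hlam hHs]
        exact (mul_lt_mul_iff_right₀ hexp).2 this
      have : -Real.exp (-((p-1)*lam*s)) < lam * J 0 ^ (1 - p) - 1 := by
        nlinarith
      simp only [hAdef, hkdef]
      linarith
    have := Real.log_lt_log hA0 hAlt
    rw [Real.log_exp] at this
    -- log A < -(k s)  ⇒  s < -(1/k) log A
    have hks : k * s < -Real.log A := by linarith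
    calc s < -Real.log A / k := (lt_div_iff₀ hk).2 (by linarith)
      _ = -(1/k) * Real.log A := by ring
  -- conclude
  by_contra hcon
  push_neg at hcon
  have hmem : -(1 / ((p-1)*lam)) * Real.log (1 - lam * J 0 ^ (1-p)) ∈ Set.Ico (0:ℝ) T := by
    constructor
    · exact le_of_lt (by simpa [hkdef, hAdef] using hbound)
    · exact hcon
  have := claim _ hmem
  simp only [hkdef, hAdef] at this
  exact lt_irrefl _ this
end

section
/- Let N ≥ 1, s ∈ (0,1), and let v : ℝᴺ → ℝ be measurable. Then ∫_{ℝᴺ}∫_{ℝᴺ} (|v(x)| − |v(y)|)² / |x−y|^{N+2s} dx dy ≤ ∫_{ℝᴺ}∫_{ℝᴺ} (v(x) − v(y))² / |x−y|^{N+2s} dx dy. Moreover, if the right-hand side is finite and both sets {v > 0} and {v < 0} have positive Lebesgue measure, then the inequality is strict. -/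
open MeasureTheory

private lemma gagliardo_key (a b w : ℝ) (hw : 0 ≤ w) :
    ENNReal.ofReal ((a - b) ^ 2 / w) =
      ENNReal.ofReal ((|a| - |b|) ^ 2 / w) +
        ENNReal.ofReal (2 * (|a * b| - a * b) / w) := by
  have hab : 0 ≤ 2 * (|a * b| - a * b) := by
    have := le_abs_self (a * b); linarith
  rw [← ENNReal.ofReal_add (div_nonneg (sq_nonneg _) hw) (div_nonneg hab hw),
    ← add_div]
  have h1 : |a * b| = |a| * |b| := abs_mul a b
  have h2 : |a| ^ 2 = a ^ 2 := sq_abs a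
  have h3 : |b| ^ 2 = b ^ 2 := sq_abs b
  have hnum : (a - b) ^ 2 = (|a| - |b|) ^ 2 + 2 * (|a * b| - a * b) := by nlinarith [h1, h2, h3]
  rw [hnum]

set_option maxHeartbeats 1000000 in
/-- The Gagliardo seminorm does not increase when passing to the absolute
value, and strictly decreases if `v` changes sign on sets of positive
measure. -/
theorem gagliardo_abs_le
    (N : ℕ) (hN : 1 ≤ N) (s : ℝ) (hs : s ∈ Set.Ioo (0 : ℝ) 1)
    (v : EuclideanSpace ℝ (Fin N) → ℝ) (hv : Measurable v) :
    (∫⁻ x, ∫⁻ y, ENNReal.ofReal ((|v x| - |v y|) ^ 2 / ‖x - y‖ ^ ((N : ℝ) + 2 * s))) ≤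
      (∫⁻ x, ∫⁻ y, ENNReal.ofReal ((v x - v y) ^ 2 / ‖x - y‖ ^ ((N : ℝ) + 2 * s))) ∧
    ((∫⁻ x, ∫⁻ y, ENNReal.ofReal ((v x - v y) ^ 2 / ‖x - y‖ ^ ((N : ℝ) + 2 * s))) < ⊤ →
      0 < volume {x | 0 < v x} → 0 < volume {x | v x < 0} →
      (∫⁻ x, ∫⁻ y, ENNReal.ofReal ((|v x| - |v y|) ^ 2 / ‖x - y‖ ^ ((N : ℝ) + 2 * s))) <
        (∫⁻ x, ∫⁻ y, ENNReal.ofReal ((v x - v y) ^ 2 / ‖x - y‖ ^ ((N : ℝ) + 2 * s)))) := by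
  set p : ℝ := (N : ℝ) + 2 * s with hp
  -- the two pieces
  set f : EuclideanSpace ℝ (Fin N) → EuclideanSpace ℝ (Fin N) → ENNReal := fun x y =>
    ENNReal.ofReal ((|v x| - |v y|) ^ 2 / ‖x - y‖ ^ p) with hf
  set g : EuclideanSpace ℝ (Fin N) → EuclideanSpace ℝ (Fin N) → ENNReal := fun x y =>
    ENNReal.ofReal (2 * (|v x * v y| - v x * v y) / ‖x - y‖ ^ p) with hg
  have hkey : ∀ x y, ENNReal.ofReal ((v x - v y) ^ 2 / ‖x - y‖ ^ p) = f x y + g x y := by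
    intro x y
    exact gagliardo_key (v x) (v y) _ (Real.rpow_nonneg (norm_nonneg _) _)
  -- measurability
  have hmf : Measurable (fun z : EuclideanSpace ℝ (Fin N) × EuclideanSpace ℝ (Fin N) => f z.1 z.2) := by
    apply ENNReal.measurable_ofReal.comp
    exact (((hv.comp measurable_fst).abs.sub (hv.comp measurable_snd).abs).pow_const 2).div
      ((measurable_fst.sub measurable_snd).norm.pow measurable_const)
  have hmg : Measurable (fun z : EuclideanSpace ℝ (Fin N) × EuclideanSpace ℝ (Fin N) => g z.1 z.2) := by
    apply ENNReal.measurable_ofReal.comp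
    have hvv : Measurable fun z : EuclideanSpace ℝ (Fin N) × EuclideanSpace ℝ (Fin N) => v z.1 * v z.2 :=
      (hv.comp measurable_fst).mul (hv.comp measurable_snd)
    exact ((measurable_const.mul (hvv.abs.sub hvv))).div
      ((measurable_fst.sub measurable_snd).norm.pow measurable_const)
  have hsplit : (∫⁻ x, ∫⁻ y, ENNReal.ofReal ((v x - v y) ^ 2 / ‖x - y‖ ^ p)) =
      (∫⁻ x, ∫⁻ y, f x y) + ∫⁻ x, ∫⁻ y, g x y := by
    simp only [hkey]
    rw [← lintegral_add_left (hmf.lintegral_prod_right')]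
    congr 1
    ext x
    exact lintegral_add_left (hmf.comp (measurable_prodMk_left (x := x))) _
  constructor
  · rw [hsplit]; exact le_self_add
  · intro hfin hA hB
    have hFne : (∫⁻ x, ∫⁻ y, f x y) ≠ ⊤ := by
      refine ne_top_of_le_ne_top hfin.ne ?_
      rw [hsplit]; exact le_self_add
    have hGne : (∫⁻ x, ∫⁻ y, g x y) ≠ 0 := by
      set A : Set (EuclideanSpace ℝ (Fin N)) := {x | 0 < v x} with hA'
      set B : Set (EuclideanSpace ℝ (Fin N)) := {x | v x < 0} with hB'
      have hmA : MeasurableSet A := measurableSet_lt measurable_const hv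
      have hmB : MeasurableSet B := measurableSet_lt hv measurable_const
      have hlow : (∫⁻ x in A, ∫⁻ y in B, g x y) ≤ ∫⁻ x, ∫⁻ y, g x y := by
        refine le_trans ?_ (setLIntegral_le_lintegral A _)
        exact lintegral_mono fun x => setLIntegral_le_lintegral B _
      have hinner : ∀ x ∈ A, 0 < ∫⁻ y in B, g x y := by
        intro x hx
        have hgx : Measurable (g x) := hmg.comp (measurable_prodMk_left (x := x))
        rw [lintegral_pos_iff_support hgx]
        have hsub : B ⊆ Function.support (g x) := by
          intro y hy
          have hx0 : 0 < v x := hx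
          have hy0 : v y < 0 := hy
          have hxy : v x * v y < 0 := mul_neg_of_pos_of_neg hx0 hy0
          have hne : x ≠ y := by rintro rfl; linarith
          have hnorm : (0 : ℝ) < ‖x - y‖ := by
            simpa [sub_eq_zero] using hne
          have hpos : 0 < 2 * (|v x * v y| - v x * v y) / ‖x - y‖ ^ p := by
            have h1 : 0 < |v x * v y| - v x * v y := by
              have := abs_pos.2 hxy.ne
              have h2 : |v x * v y| = -(v x * v y) := abs_of_neg hxy
              linarith
            exact div_pos (by linarith) (Real.rpow_pos_of_pos hnorm _)
          simp only [Function.mem_support, hg]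
          exact (ENNReal.ofReal_pos.2 hpos).ne'
        rw [Measure.restrict_apply' hmB, Set.inter_eq_right.2 hsub]
        exact hB
      have hmh : Measurable fun x => ∫⁻ y in B, g x y :=
        hmg.lintegral_prod_right'
      have houter : 0 < ∫⁻ x in A, ∫⁻ y in B, g x y := by
        rw [lintegral_pos_iff_support hmh]
        have hsubA : A ⊆ Function.support fun x => ∫⁻ y in B, g x y :=
          fun x hx => (hinner x hx).ne'
        rw [Measure.restrict_apply' hmA, Set.inter_eq_right.2 hsubA]
        exact hA
      exact (lt_of_lt_of_le houter hlow).ne'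
    rw [hsplit]
    exact ENNReal.lt_add_right hFne hGne
end
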